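/- (Theorem 2, Convergence, stationarity of accumulation.) Suppose C > 0 and L is bounded below: B ≤ L x for all x ∈ E. Let θ, s : ℕ → E and η, ε : ℕ → ℝ satisfy, for all t: θ (t+1) = θ t − η t • s t; ‖s t − g (θ t)‖ ≤ ε t; 0 ≤ ε t ≤ ‖g (θ t)‖ / 4; and 0 ≤ η t ≤ 8 / (25 * C). If furthermore the step sizes are not summable (¬ Summable η, i.e., ∑ t, η t = ∞), then liminf_{t → ∞} ‖g (θ t)‖ = 0. -/

import Mathlib

/-!
A Lipschitz gradient gives the descent lemma `L (x + v) ≤ L x + ⟪∇L x, v⟫ + C/2 ‖v‖²`. As the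
surrogate direction `s` lies within `‖∇L x‖ / 4` of the gradient, `⟪∇L x, s⟫ ≥ 3/4 ‖∇L x‖²` and
`‖s‖ ≤ 5/4 ‖∇L x‖`; with `η ≤ 8 / (25 C)` each step therefore lowers `L` by at least
`η ‖∇L x‖² / 2`. Telescoping against the lower bound `B` makes `∑ η_t ‖∇L (θ_t)‖²` finite, so if
the gradient norms stayed above some `c > 0` the step sizes would be summable.
-/

open Filter Set

section

variable {E : Type*} [NormedAddCommGroup E] [InnerProductSpace ℝ E]

theorem sq_norm_sub_mul_le_real_inner {u w : E} {r : ℝ} (h : ‖w - u‖ ≤ r) :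
    ‖u‖ ^ 2 - ‖u‖ * r ≤ inner ℝ u w := by
  have hsplit : inner ℝ u w = ‖u‖ ^ 2 + inner ℝ u (w - u) := by
    rw [inner_sub_right, real_inner_self_eq_norm_sq]; ring
  have hcs : -(‖u‖ * ‖w - u‖) ≤ inner ℝ u (w - u) :=
    neg_le_of_abs_le (abs_real_inner_le_norm u (w - u))
  nlinarith [norm_nonneg u]

theorem LipschitzWith.inner_sub_le {g : E → E} {C : NNReal} (hg : LipschitzWith C g) (x v : E)
    {t : ℝ} (ht : 0 ≤ t) :
    inner ℝ (g (x + t • v) - g x) v ≤ C * t * ‖v‖ ^ 2 :=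
  calc inner ℝ (g (x + t • v) - g x) v ≤ ‖g (x + t • v) - g x‖ * ‖v‖ := real_inner_le_norm _ _
    _ ≤ C * ‖x + t • v - x‖ * ‖v‖ := by
        gcongr; simpa only [dist_eq_norm] using hg.dist_le_mul (x + t • v) x
    _ = C * t * ‖v‖ ^ 2 := by
        rw [add_sub_cancel_left, norm_smul, Real.norm_of_nonneg ht]; ring

section

variable [CompleteSpace E] {L : E → ℝ} {g : E → E}

theorem HasGradientAt.hasDerivAt_comp_add_smul {f : E → ℝ} {f' x v : E} {t : ℝ}
    (h : HasGradientAt f f' (x + t • v)) :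
    HasDerivAt (fun t : ℝ ↦ f (x + t • v)) (inner ℝ f' v) t := by
  have hline : HasDerivAt (fun t : ℝ ↦ x + t • v) v t := by
    simpa using ((hasDerivAt_id t).smul_const v).const_add x
  have := h.hasFDerivAt.comp_hasDerivAt t hline
  simp only [InnerProductSpace.toDual_apply_apply] at this
  exact this

theorem le_add_inner_add_of_lipschitzWith_gradient (hg : ∀ x, HasGradientAt L (g x) x)
    {C : NNReal} (hLip : LipschitzWith C g) (x v : E) :
    L (x + v) ≤ L x + inner ℝ (g x) v + C / 2 * ‖v‖ ^ 2 := by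
  set φ : ℝ → ℝ := fun t ↦ L (x + t • v) - t * inner ℝ (g x) v - C / 2 * ‖v‖ ^ 2 * t ^ 2
  have hφ : ∀ t, HasDerivAt φ (inner ℝ (g (x + t • v) - g x) v - C * t * ‖v‖ ^ 2) t := by
    intro t
    refine ((((hg _).hasDerivAt_comp_add_smul).sub ((hasDerivAt_id t).mul_const _)).sub
      ((hasDerivAt_pow 2 t).const_mul (C / 2 * ‖v‖ ^ 2))).congr_deriv ?_
    rw [inner_sub_left]
    simp only [one_mul, Nat.cast_ofNat, Nat.add_one_sub_one, pow_one, sub_right_inj]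
    ring
  have hanti : AntitoneOn φ (Icc 0 1) :=
    antitoneOn_of_hasDerivWithinAt_nonpos (convex_Icc 0 1)
      (fun t _ ↦ (hφ t).continuousAt.continuousWithinAt) (fun t _ ↦ (hφ t).hasDerivWithinAt)
      fun t ht ↦ sub_nonpos.2 <| hLip.inner_sub_le x v (interior_subset ht).1
  have h01 := hanti (left_mem_Icc.2 zero_le_one) (right_mem_Icc.2 zero_le_one) zero_le_one
  simp only [φ, zero_smul, add_zero, one_smul, zero_mul, one_pow, mul_one, ne_eq,
    OfNat.ofNat_ne_zero, not_false_eq_true, zero_pow, mul_zero, sub_zero] at h01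
  linarith

theorem le_sub_of_inexact_gradient_step (hg : ∀ x, HasGradientAt L (g x) x) {C : NNReal}
    (hLip : LipschitzWith C g) {x s : E} {η : ℝ} (hs : ‖s - g x‖ ≤ ‖g x‖ / 4) (hη0 : 0 ≤ η)
    (hη : η ≤ 8 / (25 * C)) :
    L (x - η • s) ≤ L x - η * (‖g x‖ ^ 2 / 2) := by
  have hinner : 3 / 4 * ‖g x‖ ^ 2 ≤ inner ℝ (g x) s := by
    linarith [sq_norm_sub_mul_le_real_inner hs]
  have hnorm : ‖s‖ ≤ 5 / 4 * ‖g x‖ := by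
    linarith [norm_le_norm_add_norm_sub' s (g x)]
  have hηC : η * (25 * C) ≤ 8 := mul_le_of_le_div₀ (by norm_num) (by positivity) hη
  have hdesc := le_add_inner_add_of_lipschitzWith_gradient hg hLip x (-(η • s))
  rw [← sub_eq_add_neg, inner_neg_right, inner_smul_right, norm_neg, norm_smul,
    Real.norm_of_nonneg hη0] at hdesc
  have hquad : C / 2 * (η * ‖s‖) ^ 2 ≤ η * (‖g x‖ ^ 2 / 4) :=
    calc C / 2 * (η * ‖s‖) ^ 2 = η * (η * (25 * C)) * ‖s‖ ^ 2 / 50 := by ring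
      _ ≤ η * 8 * (5 / 4 * ‖g x‖) ^ 2 / 50 := by gcongr
      _ = η * (‖g x‖ ^ 2 / 4) := by ring
  linarith [mul_le_mul_of_nonneg_left hinner hη0]

end

end

theorem summable_of_le_sub_of_forall_le {f d : ℕ → ℝ} {B : ℝ} (hd : ∀ t, 0 ≤ d t)
    (hstep : ∀ t, f (t + 1) ≤ f t - d t) (hB : ∀ t, B ≤ f t) : Summable d :=
  summable_of_sum_range_le hd fun n ↦
    calc ∑ t ∈ Finset.range n, d t ≤ ∑ t ∈ Finset.range n, (f t - f (t + 1)) :=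
          Finset.sum_le_sum fun t _ ↦ by linarith [hstep t]
      _ = f 0 - f n := Finset.sum_range_sub' f n
      _ ≤ f 0 - B := by linarith [hB n]

theorem frequently_lt_of_summable_mul {η w : ℕ → ℝ} (hη0 : ∀ t, 0 ≤ η t)
    (hsum : Summable fun t ↦ η t * w t) (hdiv : ¬ Summable η) {c : ℝ} (hc : 0 < c) :
    ∃ᶠ t in atTop, w t < c := by
  refine fun hge ↦ hdiv <| .of_norm_bounded_eventually_nat (hsum.div_const c) ?_
  filter_upwards [hge] with t ht
  rw [Real.norm_of_nonneg (hη0 t), le_div_iff₀ hc]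
  exact mul_le_mul_of_nonneg_left (not_lt.1 ht) (hη0 t)

theorem liminf_eq_zero_of_frequently_lt {ι : Type*} {l : Filter ι} {u : ι → ℝ}
    (hu : ∀ i, 0 ≤ u i) (h : ∀ c > 0, ∃ᶠ i in l, u i < c) : liminf u l = 0 := by
  have hset : {a | ∀ᶠ i in l, a ≤ u i} = Iic 0 := by
    ext a
    refine ⟨fun ha ↦ not_lt.1 fun hpos ↦ h a hpos (ha.mono fun _ ↦ not_lt.2), ?_⟩
    exact fun ha ↦ .of_forall fun i ↦ le_trans ha (hu i)
  rw [liminf_eq, hset, csSup_Iic]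

theorem surrogate_gradient_liminf_zero_general
    {E : Type*} [NormedAddCommGroup E] [InnerProductSpace ℝ E] [CompleteSpace E]
    (L : E → ℝ) (g : E → E) (hg : ∀ x : E, HasGradientAt L (g x) x)
    (C : NNReal) (hLip : LipschitzWith C g)
    (B : ℝ) (hB : ∀ x : E, B ≤ L x)
    (θ s : ℕ → E) (η ε : ℕ → ℝ)
    (hθ : ∀ t : ℕ, θ (t + 1) = θ t - η t • s t)
    (hs : ∀ t : ℕ, ‖s t - g (θ t)‖ ≤ ε t)
    (hε : ∀ t : ℕ, ε t ≤ ‖g (θ t)‖ / 4)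
    (hη0 : ∀ t : ℕ, 0 ≤ η t) (hη : ∀ t : ℕ, η t ≤ 8 / (25 * (C : ℝ)))
    (hdiv : ¬ Summable η) :
    Filter.liminf (fun t : ℕ => ‖g (θ t)‖) Filter.atTop = 0 := by
  have hdescent (t : ℕ) : L (θ (t + 1)) ≤ L (θ t) - η t * (‖g (θ t)‖ ^ 2 / 2) := by
    rw [hθ t]
    exact le_sub_of_inexact_gradient_step hg hLip ((hs t).trans (hε t)) (hη0 t) (hη t)
  have hsum : Summable fun t ↦ η t * (‖g (θ t)‖ ^ 2 / 2) :=
    summable_of_le_sub_of_forall_le (fun t ↦ by have := hη0 t; positivity) hdescent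
      fun t ↦ hB (θ t)
  refine liminf_eq_zero_of_frequently_lt (fun t ↦ norm_nonneg _) fun c hc ↦ ?_
  refine (frequently_lt_of_summable_mul hη0 hsum hdiv (by positivity : 0 < c ^ 2 / 2)).mono
    fun t ht ↦ ?_
  exact (pow_lt_pow_iff_left₀ (norm_nonneg _) hc.le two_ne_zero).1 (by linarith)

/-- Theorem 2, Convergence, stationarity of accumulation:
with non-summable step sizes, the gradient norms have liminf zero. -/
theorem surrogate_gradient_liminf_zero
    {E : Type*} [NormedAddCommGroup E] [InnerProductSpace ℝ E] [CompleteSpace E]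
    (L : E → ℝ) (g : E → E) (hg : ∀ x : E, HasGradientAt L (g x) x)
    (C : NNReal) (hLip : LipschitzWith C g) (hC : 0 < (C : ℝ))
    (B : ℝ) (hB : ∀ x : E, B ≤ L x)
    (θ s : ℕ → E) (η ε : ℕ → ℝ)
    (hθ : ∀ t : ℕ, θ (t + 1) = θ t - η t • s t)
    (hs : ∀ t : ℕ, ‖s t - g (θ t)‖ ≤ ε t)
    (hε0 : ∀ t : ℕ, 0 ≤ ε t) (hε : ∀ t : ℕ, ε t ≤ ‖g (θ t)‖ / 4)
    (hη0 : ∀ t : ℕ, 0 ≤ η t) (hη : ∀ t : ℕ, η t ≤ 8 / (25 * (C : ℝ)))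
    (hdiv : ¬ Summable η) :
    Filter.liminf (fun t : ℕ => ‖g (θ t)‖) Filter.atTop = 0 :=
  surrogate_gradient_liminf_zero_general L g hg C hLip B hB θ s η ε hθ hs hε hη0 hη hdiv
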